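/- arXiv:1505.04646 — 5 statements merged into one kernel-verified Lean document; each statement's English description precedes it below -/
import Mathlib

section
/- Almost all graphs are connected with diameter 2. Precisely: the proportion of labeled simple graphs on vertex set {1,...,n} (out of all 2^(n choose 2) such graphs) that are connected and have diameter exactly 2 tends to 1 as n tends to infinity. -/
/-!
A graph fails to be connected of diameter 2 only if it is complete or some pair `u ≠ v` is at
distance greater than 2, i.e. `u`, `v` are non-adjacent with no common neighbour. For a fixed
pair this event only involves the `2(n-2)+1` edges at `u` or `v`, and exactly `3^(n-2)` of their
`2^(2(n-2)+1)` patterns realise it, so it has probability `(3/4)^(n-2)/2`. A union bound over the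
`n²` pairs and the complete graph bounds the failure probability by
`2^(-(n choose 2)) + n² (3/4)^(n-2) / 2 → 0`.
-/

open Classical in
/-- The proportion of labeled simple graphs on `{1,…,n}` (modeled as `Fin n`) satisfying `P`,
out of all `2 ^ (n choose 2)` labeled simple graphs. -/
noncomputable def graphProportion (n : ℕ) (P : SimpleGraph (Fin n) → Prop) : ℝ :=
  ((Finset.univ.filter P).card : ℝ) / 2 ^ n.choose 2

open Filter Topology

theorem Nat.card_subtype_comp_embedding_mul {α β γ : Type*} [Finite α] [Finite β]
    (i : γ ↪ α) (p : (γ → β) → Prop) :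
    Nat.card {f : α → β // p (f ∘ i)} * Nat.card β ^ Nat.card γ =
      Nat.card {g : γ → β // p g} * Nat.card β ^ Nat.card α := by
  classical
  have : Finite γ := .of_injective i i.injective
  let e : (α → β) ≃ (γ → β) × ({a // a ∉ Set.range i} → β) :=
    (Equiv.piEquivPiSubtypeProd (· ∈ Set.range i) fun _ ↦ β).trans <|
      (Equiv.ofInjective i i.injective).symm.arrowCongr (.refl β) |>.prodCongr (.refl _)
  have hsplit : Nat.card β ^ Nat.card α =
      Nat.card β ^ Nat.card γ * Nat.card ({a // a ∉ Set.range i} → β) := by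
    rw [← Nat.card_fun, ← Nat.card_fun, Nat.card_congr e, Nat.card_prod]
  have hrestrict :
      {f : α → β // p (f ∘ i)} ≃
        {g : γ → β // p g} × ({a // a ∉ Set.range i} → β) :=
    (e.subtypeEquiv fun _ ↦ Iff.rfl).trans .prodSubtypeFstEquivSubtypeProd
  rw [Nat.card_congr hrestrict, Nat.card_prod, hsplit]
  ring

lemma Nat.card_subtype_ne_and_ne {V : Type*} [Finite V] {u v : V} (huv : u ≠ v) :
    Nat.card {w // w ≠ u ∧ w ≠ v} = Nat.card V - 2 := by
  rw [← Set.ncard_pair huv, ← Set.ncard_compl, ← Nat.card_coe_set_eq]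
  exact Nat.card_congr (Equiv.subtypeEquivRight fun w ↦ by simp)

lemma Sym2.natCard_subtype_not_isDiag (V : Type*) [Finite V] :
    Nat.card {e : Sym2 V // ¬ e.IsDiag} = (Nat.card V).choose 2 := by
  classical
  have := Fintype.ofFinite V
  simp only [Nat.card_eq_fintype_card, Sym2.card_subtype_not_diag]

namespace SimpleGraph

open Classical in
noncomputable def equivEdgeIndicator (V : Type*) :
    SimpleGraph V ≃ ({e : Sym2 V // ¬ e.IsDiag} → Bool) where
  toFun G e := decide (e.1 ∈ G.edgeSet)
  invFun f := fromEdgeSet {e | ∃ h, f ⟨e, h⟩}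
  left_inv G := by
    ext x y
    simp only [decide_eq_true_eq, exists_prop, fromEdgeSet_adj, Set.mem_ofPred_eq,
      Sym2.mk_isDiag_iff, mem_edgeSet, ne_eq]
    exact ⟨fun h ↦ h.1.2, fun h ↦ ⟨⟨h.ne, h⟩, h.ne⟩⟩
  right_inv f := by
    ext ⟨e, he⟩
    simp [he]

lemma equivEdgeIndicator_apply_eq_true {V : Type*} (G : SimpleGraph V)
    (e : {e : Sym2 V // ¬ e.IsDiag}) :
    equivEdgeIndicator V G e = true ↔ e.1 ∈ G.edgeSet := by
  simp [equivEdgeIndicator]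

lemma natCard_eq_two_pow_choose (V : Type*) [Finite V] :
    Nat.card (SimpleGraph V) = 2 ^ (Nat.card V).choose 2 := by
  rw [Nat.card_congr (equivEdgeIndicator V), Nat.card_fun, Sym2.natCard_subtype_not_isDiag,
    Nat.card_eq_fintype_card, Fintype.card_bool]

variable {V : Type*} {u v : V}

def starEdge (huv : u ≠ v) :
    Option ({w // w ≠ u ∧ w ≠ v} × Bool) ↪ {e : Sym2 V // ¬ e.IsDiag} where
  toFun
    | none => ⟨s(u, v), by simpa using huv⟩
    | some (w, false) => ⟨s(u, w), by simpa using w.2.1.symm⟩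
    | some (w, true) => ⟨s(v, w), by simpa using w.2.2.symm⟩
  inj' := by
    rintro (_ | ⟨⟨w, hw⟩, _ | _⟩) (_ | ⟨⟨w', hw'⟩, _ | _⟩) h <;> grind [Sym2.eq_iff]

lemma coe_starEdge_none (huv : u ≠ v) : (starEdge huv none : Sym2 V) = s(u, v) := rfl

lemma coe_starEdge_false (huv : u ≠ v) (w : {w // w ≠ u ∧ w ≠ v}) :
    (starEdge huv (some (w, false)) : Sym2 V) = s(u, w) := rfl

lemma coe_starEdge_true (huv : u ≠ v) (w : {w // w ≠ u ∧ w ≠ v}) :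
    (starEdge huv (some (w, true)) : Sym2 V) = s(v, w) := rfl

/-- Read through `starEdge`: the edge `uv` is absent and no `w` is joined to both `u` and `v`. -/
def IsFarPattern {W : Type*} (g : Option (W × Bool) → Bool) : Prop :=
  g none = false ∧ ∀ w, ¬ (g (some (w, false)) = true ∧ g (some (w, true)) = true)

lemma two_lt_edist_iff_isFarPattern (huv : u ≠ v) (G : SimpleGraph V) :
    2 < G.edist u v ↔ IsFarPattern (equivEdgeIndicator V G ∘ starEdge huv) := by
  simp only [two_lt_edist_iff, IsFarPattern, Function.comp_apply, Bool.eq_false_iff, ne_eq,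
    equivEdgeIndicator_apply_eq_true, coe_starEdge_none, coe_starEdge_false, coe_starEdge_true,
    mem_edgeSet, huv, not_false_eq_true, true_and, Set.eq_empty_iff_forall_notMem,
    mem_commonNeighbors, not_and, Subtype.forall, and_congr_right_iff]
  exact fun _ ↦ ⟨fun h a _ ↦ h a, fun h a hua hva ↦ h a ⟨hua.ne', hva.ne'⟩ hua hva⟩

lemma card_isFarPattern (W : Type*) [Finite W] :
    Nat.card {g : Option (W × Bool) → Bool // IsFarPattern g} = 3 ^ Nat.card W := by
  let NoCommon (h : W × Bool → Bool) : Prop :=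
    ∀ w, ¬ (h (w, false) = true ∧ h (w, true) = true)
  let e₁ : {g : Option (W × Bool) → Bool // IsFarPattern g} ≃
      {b : Bool // b = false} × {h // NoCommon h} :=
    ((Equiv.piOptionEquivProd (β := fun _ ↦ Bool)).subtypeEquiv
      (q := fun x ↦ x.1 = false ∧ NoCommon x.2) fun _ ↦ Iff.rfl).trans
      (Equiv.subtypeProdEquivProd (p := fun b : Bool ↦ b = false) (q := NoCommon))
  let e₂ : {h // NoCommon h} ≃
      (W → {k : Bool → Bool // ¬ (k false = true ∧ k true = true)}) :=
    ((Equiv.curry W Bool Bool).subtypeEquiv fun _ ↦ Iff.rfl).trans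
      (Equiv.subtypePiEquivPi (p := fun _ k ↦ ¬ (k false = true ∧ k true = true)))
  rw [Nat.card_congr (e₁.trans (.prodCongr (.refl _) e₂)), Nat.card_prod, Nat.card_fun,
    Nat.card_eq_fintype_card, Nat.card_eq_fintype_card (α := {k : Bool → Bool // _}),
    Fintype.card_subtype_eq, one_mul]
  rfl

theorem natCard_two_lt_edist_mul [Finite V] (huv : u ≠ v) :
    Nat.card {G : SimpleGraph V // 2 < G.edist u v} * 2 ^ (2 * (Nat.card V - 2) + 1) =
      3 ^ (Nat.card V - 2) * 2 ^ (Nat.card V).choose 2 := by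
  have hstar :
      Nat.card (Option ({w // w ≠ u ∧ w ≠ v} × Bool)) = 2 * (Nat.card V - 2) + 1 := by
    simp [Nat.card_prod, Nat.card_subtype_ne_and_ne huv, mul_comm]
  have key := Nat.card_subtype_comp_embedding_mul (β := Bool) (starEdge huv) IsFarPattern
  rw [Nat.card_eq_fintype_card (α := Bool), Fintype.card_bool, hstar, card_isFarPattern,
    Nat.card_subtype_ne_and_ne huv, Sym2.natCard_subtype_not_isDiag] at key
  rwa [Nat.card_congr ((equivEdgeIndicator V).subtypeEquiv
    (q := fun f ↦ IsFarPattern (f ∘ starEdge huv)) (two_lt_edist_iff_isFarPattern huv))]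

lemma diameter_two_of_edist_le_two {G : SimpleGraph V} (hG : G ≠ ⊤)
    (h : ∀ u v, G.edist u v ≤ 2) :
    G.Connected ∧ (∀ u v, G.dist u v ≤ 2) ∧ ∃ u v, G.dist u v = 2 := by
  obtain ⟨u, v, huv, hadj⟩ := ne_top_iff_exists_not_adj.mp hG
  have hreach (x y : V) : G.Reachable x y :=
    reachable_of_edist_ne_top (ne_top_of_le_ne_top (by simp) (h x y))
  have hdist (x y : V) : G.dist x y ≤ 2 := by
    have := h x y
    rw [← (hreach x y).coe_dist_eq_edist] at this
    exact_mod_cast this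
  have : Nonempty V := ⟨u⟩
  refine ⟨⟨hreach⟩, hdist, u, v, ?_⟩
  have := (hreach u v).one_lt_dist_of_ne_of_not_adj huv hadj
  have := hdist u v
  omega

end SimpleGraph

section graphProportion

variable {n : ℕ}

lemma graphProportion_eq_ncard_div (P : SimpleGraph (Fin n) → Prop) :
    graphProportion n P = {G | P G}.ncard / 2 ^ n.choose 2 := by
  classical
  rw [graphProportion, Set.ncard_eq_toFinset_card', Set.toFinset_ofPred]

lemma graphProportion_nonneg (P : SimpleGraph (Fin n) → Prop) : 0 ≤ graphProportion n P := by
  unfold graphProportion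
  positivity

lemma graphProportion_mono {P Q : SimpleGraph (Fin n) → Prop} (h : ∀ G, P G → Q G) :
    graphProportion n P ≤ graphProportion n Q := by
  simp only [graphProportion_eq_ncard_div]
  exact div_le_div_of_nonneg_right (mod_cast Set.ncard_le_ncard h) (by positivity)

lemma graphProportion_or_le (P Q : SimpleGraph (Fin n) → Prop) :
    graphProportion n (fun G ↦ P G ∨ Q G) ≤ graphProportion n P + graphProportion n Q := by
  simp only [graphProportion_eq_ncard_div, ← add_div, Set.ofPred_or]
  gcongr
  exact_mod_cast Set.ncard_union_le _ _

lemma graphProportion_exists_le {ι : Type*} [Fintype ι]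
    (P : ι → SimpleGraph (Fin n) → Prop) :
    graphProportion n (fun G ↦ ∃ i, P i G) ≤ ∑ i, graphProportion n (P i) := by
  simp only [graphProportion_eq_ncard_div, ← Finset.sum_div, Set.ofPred_exists]
  gcongr
  exact_mod_cast Set.ncard_iUnion_le_of_fintype _

lemma graphProportion_not (P : SimpleGraph (Fin n) → Prop) :
    graphProportion n (fun G ↦ ¬ P G) = 1 - graphProportion n P := by
  have hcard := SimpleGraph.natCard_eq_two_pow_choose (Fin n)
  rw [Nat.card_fin] at hcard
  simp only [graphProportion_eq_ncard_div, ← Set.compl_ofPred]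
  rw [Set.ncard_compl, hcard, Nat.cast_sub (hcard ▸ Set.ncard_le_card _), sub_div, Nat.cast_pow,
    Nat.cast_ofNat, div_self (by positivity)]

lemma graphProportion_eq_top : graphProportion n (· = ⊤) = (1 / 2) ^ n.choose 2 := by
  simp [graphProportion_eq_ncard_div]

lemma graphProportion_two_lt_edist_le (u v : Fin n) :
    graphProportion n (fun G ↦ 2 < G.edist u v) ≤ (3 / 4) ^ (n - 2) / 2 := by
  rcases eq_or_ne u v with rfl | huv
  · calc _ = (0 : ℝ) := by simp [graphProportion_eq_ncard_div]
      _ ≤ _ := by positivity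
  have hcount := SimpleGraph.natCard_two_lt_edist_mul huv
  rw [Nat.card_fin] at hcount
  have hcount' : ({G : SimpleGraph (Fin n) | 2 < G.edist u v}.ncard : ℝ) *
      2 ^ (2 * (n - 2) + 1) = 3 ^ (n - 2) * 2 ^ n.choose 2 := by
    exact_mod_cast hcount
  have hpow : (3 / 4 : ℝ) ^ (n - 2) / 2 * 2 ^ (2 * (n - 2) + 1) = 3 ^ (n - 2) := by
    rw [pow_succ, pow_mul, div_pow]
    field_simp
    norm_num
  rw [graphProportion_eq_ncard_div, div_le_iff₀ (by positivity)]
  refine le_of_eq (mul_right_cancel₀ (pow_ne_zero (2 * (n - 2) + 1) two_ne_zero) ?_)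
  linear_combination hcount' - 2 ^ n.choose 2 * hpow

lemma graphProportion_not_diameter_two_le :
    graphProportion n (fun G ↦
        ¬ (G.Connected ∧ (∀ u v : Fin n, G.dist u v ≤ 2) ∧
          ∃ u v : Fin n, G.dist u v = 2)) ≤
      (1 / 2) ^ n.choose 2 + n ^ 2 * ((3 / 4) ^ (n - 2) / 2) := by
  calc _ ≤ graphProportion n
          (fun G ↦ G = ⊤ ∨ ∃ p : Fin n × Fin n, 2 < G.edist p.1 p.2) :=
        graphProportion_mono fun G hG ↦ by
          by_contra! h
          exact hG (SimpleGraph.diameter_two_of_edist_le_two h.1 fun u v ↦ h.2 (u, v))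
    _ ≤ graphProportion n (· = ⊤) +
          ∑ p : Fin n × Fin n, graphProportion n (fun G ↦ 2 < G.edist p.1 p.2) :=
        (graphProportion_or_le _ _).trans (by gcongr; exact graphProportion_exists_le _)
    _ ≤ (1 / 2) ^ n.choose 2 + ∑ _p : Fin n × Fin n, (3 / 4) ^ (n - 2) / 2 := by
        rw [graphProportion_eq_top]
        gcongr with p
        exact graphProportion_two_lt_edist_le p.1 p.2
    _ = _ := by simp [sq]

end graphProportion

lemma tendsto_half_pow_choose_two :
    Tendsto (fun n : ℕ ↦ (1 / 2 : ℝ) ^ n.choose 2) atTop (𝓝 0) := by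
  refine (tendsto_pow_atTop_nhds_zero_of_lt_one (by norm_num) (by norm_num)).comp ?_
  refine tendsto_atTop_atTop.2 fun b ↦ ⟨b + 1, fun n hn ↦ ?_⟩
  calc b ≤ (b + 1).choose 2 := by simp [Nat.choose_succ_succ]
    _ ≤ n.choose 2 := Nat.choose_le_choose 2 hn

lemma tendsto_sq_mul_three_quarters_pow :
    Tendsto (fun n : ℕ ↦ (n : ℝ) ^ 2 * ((3 / 4) ^ (n - 2) / 2)) atTop (𝓝 0) := by
  -- for `n ≥ 2`, `(3/4)^(n-2) / 2 = (8/9) (3/4)^n`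
  have h := (tendsto_pow_const_mul_const_pow_of_abs_lt_one 2
    (r := (3 / 4 : ℝ)) (by rw [abs_of_pos] <;> norm_num)).const_mul (8 / 9 : ℝ)
  rw [mul_zero] at h
  refine h.congr' ((eventually_ge_atTop 2).mono fun n hn ↦ ?_)
  obtain ⟨m, rfl⟩ := Nat.exists_eq_add_of_le' hn
  simp only [Nat.add_sub_cancel, pow_add]
  ring

/-- Almost all graphs are connected with diameter 2. -/
theorem almost_all_graphs_connected_diameter_two :
    Filter.Tendsto
      (fun n => graphProportion n (fun G =>
        G.Connected ∧ (∀ u v : Fin n, G.dist u v ≤ 2) ∧ ∃ u v : Fin n, G.dist u v = 2))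
      Filter.atTop (nhds 1) := by
  have hbad := squeeze_zero (fun _ ↦ graphProportion_nonneg _)
    (fun _ ↦ graphProportion_not_diameter_two_le)
    (by simpa using tendsto_half_pow_choose_two.add tendsto_sq_mul_three_quarters_pow)
  have := (tendsto_const_nhds (x := (1 : ℝ))).sub hbad
  simpa only [graphProportion_not, sub_sub_cancel, sub_zero] using this
end

section
/- For every nonnegative integer k, almost all graphs are k-connected. Precisely: for each fixed k ≥ 0, the proportion of labeled simple graphs on vertex set {1,...,n} that are k-connected tends to 1 as n tends to infinity. -/
open Finset

theorem Nat.choose_le_pow_sub (n r : ℕ) : n.choose r ≤ n ^ (n - r) := by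
  rcases le_or_gt r n with h | h
  · rw [← Nat.choose_symm h]
    exact Nat.choose_le_pow n (n - r)
  · simp [Nat.choose_eq_zero_of_lt h]

theorem pow_sq_pow_mul_sub_le {r : ℝ} (hr0 : 0 ≤ r) (hr1 : r ≤ 1) {j m : ℕ} (hjm : 2 * j ≤ m) :
    (r ^ 2) ^ (j * (m - j)) ≤ (r ^ m) ^ j := by
  rw [← pow_mul, ← pow_mul]
  exact pow_le_pow_of_le_one hr0 hr1 (by nlinarith [Nat.sub_add_cancel (by omega : j ≤ m)])

theorem sum_Icc_pow_le {x : ℝ} (hx0 : 0 ≤ x) (hx1 : x ≤ 1) (n : ℕ) :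
    ∑ j ∈ Icc 1 n, x ^ j ≤ n * x := by
  calc ∑ j ∈ Icc 1 n, x ^ j ≤ #(Icc 1 n) • x :=
        sum_le_card_nsmul _ _ _ fun j hj => pow_le_of_le_one hx0 hx1 (by simp at hj; omega)
    _ = n * x := by simp

theorem Finset.exists_subset_subset_card_add_eq {α : Type*} {A B : Finset α} {m : ℕ}
    (hA : A.Nonempty) (hAB : #A ≤ #B) (hm : 2 ≤ m) (hmAB : m ≤ #A + #B) :
    ∃ A' ⊆ A, ∃ B' ⊆ B, A'.Nonempty ∧ 2 * #A' ≤ m ∧ #A' + #B' = m := by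
  have hA1 := hA.card_pos
  obtain ⟨A', hA', hA'card⟩ := exists_subset_card_eq (min_le_left #A (m / 2))
  obtain ⟨B', hB', hB'card⟩ := exists_subset_card_eq (s := B) (n := m - min #A (m / 2)) (by omega)
  exact ⟨A', hA', B', hB', card_pos.1 (by omega), by omega, by omega⟩

namespace SimpleGraph

section crossEdges

variable {V : Type*} [DecidableEq V]

def crossEdges (A B : Finset V) : Finset (Sym2 V) :=
  (A ×ˢ B).image fun p => s(p.1, p.2)

variable {A B : Finset V}

theorem disjoint_edgeFinset_crossEdges_iff (G : SimpleGraph V) [Fintype G.edgeSet] :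
    Disjoint G.edgeFinset (crossEdges A B) ↔ ∀ a ∈ A, ∀ b ∈ B, ¬ G.Adj a b := by
  simp only [crossEdges, disjoint_right, mem_image, mem_product, mem_edgeFinset]
  constructor
  · intro h a ha b hb hab
    exact h ⟨(a, b), ⟨ha, hb⟩, rfl⟩ hab
  · rintro h _ ⟨⟨a, b⟩, ⟨ha, hb⟩, rfl⟩
    exact h a ha b hb

theorem card_crossEdges (h : Disjoint A B) : #(crossEdges A B) = #A * #B := by
  rw [crossEdges, card_image_of_injOn, card_product]
  rintro ⟨a, b⟩ hab ⟨a', b'⟩ hab' he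
  simp only [coe_product, Set.mem_prod, mem_coe] at hab hab'
  rcases Sym2.eq_iff.1 he with ⟨rfl, rfl⟩ | ⟨rfl, rfl⟩
  · rfl
  · exact absurd hab'.2 (Finset.disjoint_left.1 h hab.1)

end crossEdges

variable {V : Type*} [Fintype V] [DecidableEq V]

theorem crossEdges_subset_edgeFinset_top {A B : Finset V} (h : Disjoint A B) :
    crossEdges A B ⊆ (⊤ : SimpleGraph V).edgeFinset := by
  simp only [crossEdges, image_subset_iff, mem_product, mem_edgeFinset, edgeSet_top]
  rintro ⟨a, b⟩ ⟨ha, hb⟩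
  exact fun hab : a = b => Finset.disjoint_left.1 h ha (hab ▸ hb)

open Classical in
theorem card_filter_disjoint_edgeFinset (F : Finset (Sym2 V)) :
    #{G : SimpleGraph V | Disjoint G.edgeFinset F} = 2 ^ #((⊤ : SimpleGraph V).edgeFinset \ F) := by
  rw [← card_powerset]
  refine card_nbij' (fun G => G.edgeFinset) (fun s => fromEdgeSet ↑s) ?_ ?_ ?_ ?_
  · intro G hG
    simp only [coe_filter, mem_univ, true_and, Set.mem_ofPred_eq] at hG
    rw [mem_coe, mem_powerset, subset_sdiff]
    exact ⟨edgeFinset_mono le_top, hG⟩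
  · intro s hs
    simp only [coe_powerset, Set.mem_preimage, Set.mem_powerset_iff, coe_subset, subset_sdiff] at hs
    simp only [coe_filter, mem_univ, true_and, Set.mem_ofPred_eq]
    rw [← disjoint_coe, coe_edgeFinset, edgeSet_fromEdgeSet]
    exact Set.disjoint_of_subset_left Set.sdiff_subset (by exact_mod_cast hs.2)
  · intro G _
    simp
  · intro s hs
    simp only [coe_powerset, Set.mem_preimage, Set.mem_powerset_iff, coe_subset, subset_sdiff] at hs
    apply coe_injective
    rw [coe_edgeFinset, edgeSet_fromEdgeSet, sdiff_eq_left, ← Set.subset_compl_iff_disjoint_right,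
      ← edgeSet_top, ← coe_edgeFinset]
    exact_mod_cast hs.1

theorem card_univ_simpleGraph :
    #(univ : Finset (SimpleGraph V)) = 2 ^ (Fintype.card V).choose 2 := by
  classical
  have h := card_filter_disjoint_edgeFinset (V := V) ∅
  simp only [disjoint_empty_right, filter_true, sdiff_empty] at h
  rw [h, card_edgeFinset_top_eq_card_choose_two]

open Classical in
theorem card_filter_div_eq_one_sub (P : SimpleGraph V → Prop) :
    (#{G : SimpleGraph V | P G} : ℝ) / 2 ^ (Fintype.card V).choose 2 =
      1 - (#{G : SimpleGraph V | ¬ P G} : ℝ) / 2 ^ (Fintype.card V).choose 2 := by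
  have hcard := card_filter_add_card_filter_not (s := univ) P
  rw [card_univ_simpleGraph] at hcard
  rw [eq_sub_iff_add_eq, ← add_div, div_eq_one_iff_eq (by positivity)]
  exact_mod_cast hcard

open Classical in
theorem card_filter_forall_not_adj_div {A B : Finset V} (h : Disjoint A B) :
    (#{G : SimpleGraph V | ∀ a ∈ A, ∀ b ∈ B, ¬ G.Adj a b} : ℝ) / 2 ^ (Fintype.card V).choose 2 =
      (1 / 2) ^ (#A * #B) := by
  have hsub := crossEdges_subset_edgeFinset_top h
  have hle := card_le_card hsub
  simp_rw [← disjoint_edgeFinset_crossEdges_iff, card_filter_disjoint_edgeFinset,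
    card_sdiff_of_subset hsub, card_crossEdges h] at hle ⊢
  rw [card_edgeFinset_top_eq_card_choose_two] at hle ⊢
  push_cast
  rw [pow_sub₀ _ two_ne_zero hle]
  field_simp
  rw [← mul_pow]
  norm_num

theorem exists_disjoint_forall_not_adj_of_not_connected_induce (G : SimpleGraph V) {S : Finset V}
    (hS : #S < Fintype.card V) (h : ¬ (G.induce (↑S : Set V)ᶜ).Connected) :
    ∃ A B : Finset V, Disjoint A B ∧ A.Nonempty ∧ B.Nonempty ∧ #A + #B = Fintype.card V - #S ∧
      ∀ a ∈ A, ∀ b ∈ B, ¬ G.Adj a b := by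
  classical
  set H := G.induce (↑S : Set V)ᶜ
  have hcard : Fintype.card ((↑S : Set V)ᶜ : Set V) = Fintype.card V - #S := by
    rw [Fintype.card_compl_set]
    simp
  have : Nonempty ((↑S : Set V)ᶜ : Set V) := Fintype.card_pos_iff.1 (by omega)
  obtain ⟨u, v, huv⟩ : ∃ u v, ¬ H.Reachable u v := by
    by_contra! hr
    exact h ((connected_iff _).2 ⟨hr, this⟩)
  let emb := Function.Embedding.subtype (· ∈ ((↑S : Set V)ᶜ : Set V))
  refine ⟨(univ.filter (H.Reachable u)).map emb, (univ.filter (¬ H.Reachable u ·)).map emb,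
    (disjoint_map emb).2 (disjoint_filter_filter_not _ _ _), ⟨u, mem_map_of_mem emb (by simp)⟩,
    ⟨v, mem_map_of_mem emb (by simpa using huv)⟩, ?_, ?_⟩
  · rw [card_map, card_map, card_filter_add_card_filter_not, card_univ, hcard]
  · simp only [mem_map, mem_filter, mem_univ, true_and]
    rintro _ ⟨a, ha, rfl⟩ _ ⟨b, hb, rfl⟩ hab
    exact hb (ha.trans (Adj.reachable (by simpa [H, emb] using hab)))

end SimpleGraph

variable {V : Type*} [Fintype V] [DecidableEq V]

variable (V) in
def balancedDisjointPairs (m : ℕ) : Finset (Finset V × Finset V) :=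
  {p | Disjoint p.1 p.2 ∧ p.1.Nonempty ∧ 2 * #p.1 ≤ m ∧ #p.1 + #p.2 = m}

theorem card_filter_balancedDisjointPairs_le (hV : 0 < Fintype.card V) (m j : ℕ) :
    #{p ∈ balancedDisjointPairs V m | #p.1 = j} ≤
      Fintype.card V ^ (Fintype.card V + 1 - m + 2 * j) := by
  set n := Fintype.card V
  have hsub : {p ∈ balancedDisjointPairs V m | #p.1 = j} ⊆
      powersetCard j univ ×ˢ powersetCard (m - j) univ := by
    intro p hp
    simp only [balancedDisjointPairs, mem_filter, mem_univ, true_and] at hp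
    simp only [mem_product, mem_powersetCard, subset_univ, true_and]
    omega
  calc _ ≤ n.choose j * n.choose (m - j) := by simpa using card_le_card hsub
    _ ≤ n ^ j * n ^ (n - (m - j)) :=
        Nat.mul_le_mul (Nat.choose_le_pow n j) (Nat.choose_le_pow_sub n (m - j))
    _ ≤ n ^ (n + 1 - m + 2 * j) := by
        rw [← pow_add]
        exact Nat.pow_le_pow_right hV (by omega)

theorem sum_balancedDisjointPairs_le (hV : 0 < Fintype.card V) {r : ℝ} (hr0 : 0 ≤ r)
    (hr1 : r ≤ 1) (m : ℕ) :
    ∑ p ∈ balancedDisjointPairs V m, (r ^ 2) ^ (#p.1 * #p.2) ≤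
      Fintype.card V ^ (Fintype.card V + 1 - m) *
        ∑ j ∈ Icc 1 (Fintype.card V), ((Fintype.card V : ℝ) ^ 2 * r ^ m) ^ j := by
  set n := Fintype.card V
  rw [← sum_fiberwise_of_maps_to (g := fun p => #p.1) (t := Icc 1 n), mul_sum]
  · refine sum_le_sum fun j _ => ?_
    have hterm : ∀ p ∈ {p ∈ balancedDisjointPairs V m | #p.1 = j},
        (r ^ 2) ^ (#p.1 * #p.2) ≤ (r ^ m) ^ j := by
      intro p hp
      simp only [balancedDisjointPairs, mem_filter, mem_univ, true_and] at hp
      obtain ⟨⟨-, -, h2, hsum⟩, rfl⟩ := hp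
      rw [show #p.2 = m - #p.1 by omega]
      exact pow_sq_pow_mul_sub_le hr0 hr1 h2
    have hcard : (#{p ∈ balancedDisjointPairs V m | #p.1 = j} : ℝ) ≤
        (n : ℝ) ^ (n + 1 - m + 2 * j) := by
      exact_mod_cast card_filter_balancedDisjointPairs_le hV m j
    calc _ ≤ #{p ∈ balancedDisjointPairs V m | #p.1 = j} • (r ^ m) ^ j :=
          sum_le_card_nsmul _ _ _ hterm
      _ ≤ (n : ℝ) ^ (n + 1 - m + 2 * j) * (r ^ m) ^ j := by
          rw [nsmul_eq_mul]
          gcongr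
      _ = _ := by ring
  · intro p hp
    simp only [balancedDisjointPairs, mem_filter, mem_univ, true_and] at hp
    exact mem_Icc.2 ⟨hp.2.1.card_pos, card_le_univ p.1⟩

namespace SimpleGraph

theorem exists_mem_balancedDisjointPairs_of_not_connected_induce
    (G : SimpleGraph V) {S : Finset V} {m : ℕ} (hm : 2 ≤ m) (hS : m + #S ≤ Fintype.card V)
    (h : ¬ (G.induce (↑S : Set V)ᶜ).Connected) :
    ∃ p ∈ balancedDisjointPairs V m, ∀ a ∈ p.1, ∀ b ∈ p.2, ¬ G.Adj a b := by
  obtain ⟨A, B, hAB, hA, hB, hcard, hG⟩ :=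
    G.exists_disjoint_forall_not_adj_of_not_connected_induce (by omega) h
  wlog hle : #A ≤ #B generalizing A B
  · exact this B A hAB.symm hB hA (by omega) (fun b hb a ha hba => hG a ha b hb hba.symm) (by omega)
  obtain ⟨A', hA', B', hB', hA'ne, h2, hsum⟩ :=
    exists_subset_subset_card_add_eq hA hle hm (by omega)
  refine ⟨(A', B'), ?_, fun a ha b hb => hG a (hA' ha) b (hB' hb)⟩
  simp only [balancedDisjointPairs, mem_filter, mem_univ, true_and]
  exact ⟨hAB.mono hA' hB', hA'ne, h2, hsum⟩

open Classical in
theorem card_filter_not_connected_induce_div_le_sum {k : ℕ} (hk : k < Fintype.card V) :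
    (#{G : SimpleGraph V | ¬ ∀ S : Finset V, #S < k → (G.induce (↑S : Set V)ᶜ).Connected} : ℝ) /
        2 ^ (Fintype.card V).choose 2 ≤
      ∑ p ∈ balancedDisjointPairs V (Fintype.card V + 1 - k), (1 / 2 : ℝ) ^ (#p.1 * #p.2) := by
  have hsub : ({G | ¬ ∀ S : Finset V, #S < k → (G.induce (↑S : Set V)ᶜ).Connected} :
      Finset (SimpleGraph V)) ⊆
      (balancedDisjointPairs V (Fintype.card V + 1 - k)).biUnion
        fun p => ({G | ∀ a ∈ p.1, ∀ b ∈ p.2, ¬ G.Adj a b} : Finset (SimpleGraph V)) := by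
    intro G hG
    simp only [mem_filter, mem_univ, true_and, not_forall] at hG
    obtain ⟨S, hS, hG⟩ := hG
    obtain ⟨p, hp, hpG⟩ :=
      G.exists_mem_balancedDisjointPairs_of_not_connected_induce (m := Fintype.card V + 1 - k)
        (by omega) (by omega) hG
    exact mem_biUnion.2 ⟨p, hp, by simpa using hpG⟩
  calc _ ≤ (∑ p ∈ balancedDisjointPairs V (Fintype.card V + 1 - k),
          #{G : SimpleGraph V | ∀ a ∈ p.1, ∀ b ∈ p.2, ¬ G.Adj a b} : ℝ) /
            2 ^ (Fintype.card V).choose 2 := by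
        gcongr
        exact_mod_cast (card_le_card hsub).trans card_biUnion_le
    _ = _ := by
        rw [sum_div]
        refine sum_congr rfl fun p hp => card_filter_forall_not_adj_div ?_
        simp only [balancedDisjointPairs, mem_filter] at hp
        exact hp.2.1

open Classical in
theorem card_filter_not_connected_induce_div_le {k : ℕ} (hk : k < Fintype.card V)
    (hsmall : (Fintype.card V : ℝ) ^ 2 * (√2)⁻¹ ^ (Fintype.card V - k) ≤ 1) :
    (#{G : SimpleGraph V | ¬ ∀ S : Finset V, #S < k → (G.induce (↑S : Set V)ᶜ).Connected} : ℝ) /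
        2 ^ (Fintype.card V).choose 2 ≤
      Fintype.card V ^ (k + 3) * (√2)⁻¹ ^ (Fintype.card V - k) := by
  set n := Fintype.card V
  set r : ℝ := (√2)⁻¹
  have hr0 : 0 ≤ r := by positivity
  have hr1 : r ≤ 1 := inv_le_one_of_one_le₀ (by simp [Real.one_le_sqrt])
  have hr2 : r ^ 2 = 1 / 2 := by simp [r, inv_pow]
  have hrm : r ^ (n + 1 - k) ≤ r ^ (n - k) := pow_le_pow_of_le_one hr0 hr1 (by omega)
  have hx1 : (n : ℝ) ^ 2 * r ^ (n + 1 - k) ≤ 1 := le_trans (by gcongr) hsmall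
  calc _ ≤ ∑ p ∈ balancedDisjointPairs V (n + 1 - k), (r ^ 2) ^ (#p.1 * #p.2) := by
        rw [hr2]
        exact card_filter_not_connected_induce_div_le_sum hk
    _ ≤ n ^ k * ∑ j ∈ Icc 1 n, ((n : ℝ) ^ 2 * r ^ (n + 1 - k)) ^ j := by
        have h := sum_balancedDisjointPairs_le (V := V) (by omega) hr0 hr1 (n + 1 - k)
        rwa [show n + 1 - (n + 1 - k) = k by omega] at h
    _ ≤ n ^ k * (n * ((n : ℝ) ^ 2 * r ^ (n + 1 - k))) := by
        gcongr
        exact sum_Icc_pow_le (by positivity) hx1 n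
    _ = n ^ (k + 3) * r ^ (n + 1 - k) := by ring
    _ ≤ n ^ (k + 3) * r ^ (n - k) := mul_le_mul_of_nonneg_left hrm (by positivity)

end SimpleGraph

open Filter Topology

theorem tendsto_pow_mul_pow_sub_atTop_nhds_zero (a b : ℕ) {r : ℝ} (hr0 : r ≠ 0) (hr : |r| < 1) :
    Tendsto (fun n : ℕ => (n : ℝ) ^ a * r ^ (n - b)) atTop (𝓝 0) := by
  have h := (tendsto_pow_const_mul_const_pow_of_abs_lt_one a hr).const_mul (r ^ b)⁻¹
  rw [mul_zero] at h
  refine h.congr' ?_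
  filter_upwards [eventually_ge_atTop b] with n hn
  rw [pow_sub₀ _ hr0 hn]
  ring

open Classical in
theorem tendsto_card_filter_not_connected_induce_div (k : ℕ) :
    Tendsto (fun n => (#{G : SimpleGraph (Fin n) |
      ¬ ∀ S : Finset (Fin n), #S < k → (G.induce (↑S : Set (Fin n))ᶜ).Connected} : ℝ) /
        2 ^ n.choose 2) atTop (𝓝 0) := by
  have hr0 : (√2)⁻¹ ≠ 0 := by positivity
  have hr1 : |(√2)⁻¹| < 1 := by
    rw [abs_of_pos (by positivity)]
    exact inv_lt_one_of_one_lt₀ (by simp [Real.lt_sqrt])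
  have hsmall : ∀ᶠ n : ℕ in atTop, (n : ℝ) ^ 2 * (√2)⁻¹ ^ (n - k) ≤ 1 :=
    (tendsto_pow_mul_pow_sub_atTop_nhds_zero 2 k hr0 hr1).eventually (eventually_le_nhds one_pos)
  refine squeeze_zero' (Eventually.of_forall fun n => by positivity) ?_
    (tendsto_pow_mul_pow_sub_atTop_nhds_zero (k + 3) k hr0 hr1)
  filter_upwards [hsmall, eventually_gt_atTop k] with n hn hk
  have h := SimpleGraph.card_filter_not_connected_induce_div_le (V := Fin n) (k := k)
  simp only [Fintype.card_fin] at h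
  exact h hk hn

/-- For every nonnegative integer `k`, almost all graphs are `k`-connected: they have more than
`k` vertices, and deleting any set of fewer than `k` vertices leaves a connected graph. -/
theorem almost_all_graphs_k_connected (k : ℕ) :
    Filter.Tendsto
      (fun n => graphProportion n (fun G =>
        k < n ∧ ∀ S : Finset (Fin n), S.card < k → (G.induce (↑S : Set (Fin n))ᶜ).Connected))
      Filter.atTop (nhds 1) := by
  classical
  rw [show (1 : ℝ) = 1 - 0 by simp]
  refine (tendsto_const_nhds.sub (tendsto_card_filter_not_connected_induce_div k)).congr' ?_
  filter_upwards [eventually_gt_atTop k] with n hk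
  have h := SimpleGraph.card_filter_div_eq_one_sub (V := Fin n)
    fun G => ∀ S : Finset (Fin n), #S < k → (G.induce (↑S : Set (Fin n))ᶜ).Connected
  simp only [Fintype.card_fin] at h
  simp only [graphProportion, hk, true_and]
  convert h.symm
end

section
/- If a graph G is not complete and has a Hamiltonian path, then the proper connection number of G equals 2. -/
/-- An edge-coloring `c` (on unordered pairs of vertices) makes `G` properly connected if every
pair of distinct vertices is joined by a path whose consecutive edges receive different colors. -/
def IsProperPathColoring {V : Type*} (G : SimpleGraph V) (c : Sym2 V → ℕ) : Prop :=
  ∀ u v : V, u ≠ v → ∃ p : G.Walk u v, p.IsPath ∧ (p.edges.map c).Chain' (· ≠ ·)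

/-- The proper connection number of `G`: the least `k` such that some edge-coloring using at most
`k` colors is a proper-path coloring of `G`. -/
noncomputable def properConnectionNumber {V : Type*} (G : SimpleGraph V) : ℕ :=
  sInf {k | ∃ c : Sym2 V → ℕ, (∀ e, c e < k) ∧ IsProperPathColoring G c}

/-!
Colour the edges of a Hamiltonian path alternately by the parity of their position. Any two
vertices lie on the path, and the segment between them is a properly coloured path, so two colours
suffice. One colour does not: a properly coloured path then has at most one edge, so two
non-adjacent vertices (which exist as `G` is not complete) cannot be joined.
-/

namespace List

theorem Nodup.isChain_map_idxOf_mod_two {α : Type*} [DecidableEq α] {l : List α}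
    (hl : l.Nodup) : (l.map (l.idxOf · % 2)).IsChain (· ≠ ·) := by
  rw [isChain_iff_getElem]
  intro i hi
  simp only [length_map] at hi
  simp only [getElem_map, hl.idxOf_getElem]
  omega

end List

namespace SimpleGraph.Walk

variable {V : Type*} [DecidableEq V] {G : SimpleGraph V} {u v : V}

theorem exists_isSubwalk_of_mem_support (p : G.Walk u v) {x y : V}
    (hx : x ∈ p.support) (hy : y ∈ p.support) :
    ∃ q : G.Walk x y, q.IsSubwalk p ∨ q.reverse.IsSubwalk p := by
  have hx' : x ∈ (p.takeUntil y hy).support ∨ x ∈ (p.dropUntil y hy).support := by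
    rwa [← mem_support_append_iff, p.take_spec hy]
  rcases hx' with hx | hx
  · exact ⟨_, .inl <| (isSubwalk_dropUntil _ hx).trans (p.isSubwalk_takeUntil hy)⟩
  · refine ⟨((p.dropUntil y hy).takeUntil x hx).reverse, .inr ?_⟩
    rw [reverse_reverse]
    exact (isSubwalk_takeUntil _ hx).trans (p.isSubwalk_dropUntil hy)

/-- Edges off `p` get the colour `p.length % 2`, since `idxOf` returns the length on a miss. -/
def alternatingColoring (p : G.Walk u v) (e : Sym2 V) : ℕ :=
  p.edges.idxOf e % 2

theorem alternatingColoring_lt_two (p : G.Walk u v) (e : Sym2 V) :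
    p.alternatingColoring e < 2 :=
  Nat.mod_lt _ two_pos

theorem IsTrail.isChain_map_alternatingColoring {p : G.Walk u v} (hp : p.IsTrail)
    {x y : V} {q : G.Walk x y} (hq : q.IsSubwalk p) :
    (q.edges.map p.alternatingColoring).IsChain (· ≠ ·) :=
  hp.edges_nodup.isChain_map_idxOf_mod_two.infix (hq.edges_isInfix.map _)

theorem IsHamiltonian.isProperPathColoring_alternatingColoring {p : G.Walk u v}
    (hp : p.IsHamiltonian) : IsProperPathColoring G p.alternatingColoring := by
  intro x y _
  obtain ⟨q, hq | hq⟩ := p.exists_isSubwalk_of_mem_support (hp.mem_support x) (hp.mem_support y)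
  · exact ⟨q, isPath_of_isSubwalk hq hp.isPath, hp.isPath.isTrail.isChain_map_alternatingColoring hq⟩
  · refine ⟨q, (isPath_reverse_iff q).1 (isPath_of_isSubwalk hq hp.isPath), ?_⟩
    have := hp.isPath.isTrail.isChain_map_alternatingColoring hq
    rw [edges_reverse, List.map_reverse, List.isChain_reverse] at this
    exact this.imp fun _ _ h => h.symm

end SimpleGraph.Walk

namespace SimpleGraph

variable {V : Type*} {G : SimpleGraph V}

theorem eq_top_of_isProperPathColoring_const {n : ℕ}
    (h : IsProperPathColoring G fun _ => n) : G = ⊤ := by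
  ext x y
  refine ⟨G.ne_of_adj, fun hxy => ?_⟩
  obtain ⟨q, -, hq⟩ := h x y hxy
  match q, hq with
  | .nil, _ => exact absurd rfl hxy
  | .cons hadj .nil, _ => exact hadj
  | .cons _ (.cons _ _), hq => exact absurd rfl (List.isChain_cons_cons.1 hq).1

theorem two_le_of_isProperPathColoring (hG : G ≠ ⊤) {c : Sym2 V → ℕ} {k : ℕ}
    (hc : ∀ e, c e < k) (h : IsProperPathColoring G c) : 2 ≤ k := by
  by_contra! hk
  obtain rfl : c = fun _ => 0 := funext fun e => by have := hc e; omega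
  exact hG (eq_top_of_isProperPathColoring_const h)

end SimpleGraph

theorem pc_eq_two_of_not_complete_hamiltonian_path_general {V : Type*} [DecidableEq V]
    (G : SimpleGraph V) (hnc : G ≠ ⊤)
    (hham : ∃ (u v : V) (p : G.Walk u v), p.IsHamiltonian) :
    properConnectionNumber G = 2 := by
  obtain ⟨u, v, p, hp⟩ := hham
  have two_mem : 2 ∈ {k | ∃ c : Sym2 V → ℕ, (∀ e, c e < k) ∧ IsProperPathColoring G c} :=
    ⟨_, p.alternatingColoring_lt_two, hp.isProperPathColoring_alternatingColoring⟩
  refine le_antisymm (Nat.sInf_le two_mem) (le_csInf ⟨2, two_mem⟩ ?_)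
  rintro k ⟨c, hc, hpc⟩
  exact SimpleGraph.two_le_of_isProperPathColoring hnc hc hpc

/-- If a graph is not complete and has a Hamiltonian path, then its proper connection number
equals 2. -/
theorem pc_eq_two_of_not_complete_hamiltonian_path {V : Type*} [Fintype V] [DecidableEq V]
    (G : SimpleGraph V) (hnc : G ≠ ⊤)
    (hham : ∃ (u v : V) (p : G.Walk u v), p.IsHamiltonian) :
    properConnectionNumber G = 2 :=
  pc_eq_two_of_not_complete_hamiltonian_path_general G hnc hham
end

section
/- Let α : ℕ → ℝ satisfy α(n) → +∞ and α(n) = o(log n), and let p(n) = (log n + α(n))/n. Then with high probability the Erdős–Rényi random graph G(n, p(n)) has at most n^{0.1} small vertices; that is, the probability that the number of vertices of G(n,p(n)) of degree less than (log n)/100 is at most n^{0.1} tends to 1 as n tends to infinity. -/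
/-!
Markov's inequality bounds the probability of more than `n ^ 0.1` small vertices by
`n ^ 0.9 · P(Bin(n - 1, p) < K)` with `K = ⌈log n / 100⌉`. Bounding each term of the lower binomial
tail by `(m p e^p)^j / j! · e^{-pm}` (with `m = n - 1`), the terms increase up to `K` because
`m p e^p ≥ K`, and `m p e^p ≤ e^7 K` gives `(m p e^p)^K / K! ≤ e^{8K} ≈ n^{0.08}`. Since
`e^{-pm} ≈ n^{-1}`, the probability of the bad event is `O(log n · n^{-0.02})`.
-/

open Finset Real Filter Topology
open scoped Nat

open Classical in
/-- The probability that the Erdős–Rényi random graph `G(n,p)` lies in the event `A`: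
each graph `G` on `Fin n` has probability `p^(#edges of G) * (1-p)^((n choose 2) - #edges of G)`. -/
noncomputable def erProb (n : ℕ) (p : ℝ) (A : Set (SimpleGraph (Fin n))) : ℝ :=
  ∑ G : SimpleGraph (Fin n),
    if G ∈ A then p ^ G.edgeSet.ncard * (1 - p) ^ (n.choose 2 - G.edgeSet.ncard) else 0

noncomputable def randSubsetProb {β : Type*} (s : Finset β) (p : ℝ) (u : Finset β) : ℝ :=
  p ^ u.card * (1 - p) ^ (s.card - u.card)

noncomputable def binomLowerTail (m : ℕ) (p : ℝ) (K : ℕ) : ℝ :=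
  ∑ j ∈ range K, (m.choose j : ℝ) * p ^ j * (1 - p) ^ (m - j)

section RandSubset

variable {β : Type*} {p : ℝ}

lemma randSubsetProb_nonneg (hp0 : 0 ≤ p) (hp1 : p ≤ 1) (s u : Finset β) :
    0 ≤ randSubsetProb s p u :=
  mul_nonneg (pow_nonneg hp0 _) (pow_nonneg (sub_nonneg.2 hp1) _)

lemma sum_randSubsetProb (s : Finset β) (p : ℝ) :
    ∑ u ∈ s.powerset, randSubsetProb s p u = 1 := by
  simp [randSubsetProb, sum_pow_mul_eq_add_pow]

lemma sum_randSubsetProb_card_lt (s : Finset β) (p : ℝ) (K : ℕ) :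
    ∑ u ∈ s.powerset, randSubsetProb s p u * (if u.card < K then 1 else 0)
      = binomLowerTail s.card p K := by
  let g j : ℝ := s.card.choose j * (p ^ j * (1 - p) ^ (s.card - j)) * if j < K then 1 else 0
  calc ∑ u ∈ s.powerset, randSubsetProb s p u * (if u.card < K then 1 else 0)
      = ∑ j ∈ range (s.card + 1), g j := by
        simp only [randSubsetProb]
        rw [sum_powerset_apply_card
          (fun j => p ^ j * (1 - p) ^ (s.card - j) * if j < K then 1 else 0)]
        simp only [nsmul_eq_mul, g, mul_assoc]
    _ = ∑ j ∈ range (s.card + 1 + K), g j := by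
        refine sum_subset (range_subset_range.2 (by omega)) fun j _ hj => ?_
        simp [g, Nat.choose_eq_zero_of_lt (show s.card < j by simpa using hj)]
    _ = ∑ j ∈ range K, g j := by
        refine (sum_subset (range_subset_range.2 (by omega)) fun j _ hj => ?_).symm
        simp [g, show ¬ j < K by simpa using hj]
    _ = binomLowerTail s.card p K :=
        sum_congr rfl fun j hj => by simp only [g, if_pos (mem_range.1 hj)]; ring

variable [DecidableEq β]

lemma sum_powerset_insert_randSubsetProb_mul {a : β} {s : Finset β} (ha : a ∉ s)
    (g : Finset β → ℝ) (hg : ∀ u ∈ s.powerset, g (insert a u) = g u) :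
    ∑ u ∈ (insert a s).powerset, randSubsetProb (insert a s) p u * g u
      = ∑ u ∈ s.powerset, randSubsetProb s p u * g u := by
  rw [sum_powerset_insert ha, ← sum_add_distrib]
  refine sum_congr rfl fun u hu => ?_
  have hus : u ⊆ s := mem_powerset.1 hu
  have hau : a ∉ u := fun h => ha (hus h)
  rw [hg u hu, randSubsetProb, randSubsetProb, randSubsetProb, card_insert_of_notMem ha,
    card_insert_of_notMem hau, Nat.succ_sub_succ, Nat.succ_sub (card_le_card hus), pow_succ,
    pow_succ]
  ring

lemma sum_randSubsetProb_mul_inter {s t : Finset β} (hts : t ⊆ s) (f : Finset β → ℝ) :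
    ∑ u ∈ s.powerset, randSubsetProb s p u * f (u ∩ t)
      = ∑ u ∈ t.powerset, randSubsetProb t p u * f u := by
  obtain ⟨r, hrt, rfl⟩ : ∃ r, Disjoint r t ∧ s = r ∪ t :=
    ⟨s \ t, sdiff_disjoint, (sdiff_union_of_subset hts).symm⟩
  clear hts
  induction r using Finset.induction_on with
  | empty =>
    simp only [empty_union]
    exact sum_congr rfl fun u hu => by rw [inter_eq_left.2 (mem_powerset.1 hu)]
  | insert a r ha ih =>
    have hat : a ∉ t := disjoint_left.1 hrt (mem_insert_self a r)
    rw [insert_union, sum_powerset_insert_randSubsetProb_mul (by simp [ha, hat]),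
      ih (disjoint_of_subset_left (subset_insert a r) hrt)]
    intro u _
    rw [insert_inter_of_notMem hat]

end RandSubset

section Graph

open Classical SimpleGraph

variable {V : Type*} [Fintype V]

lemma ncard_neighborSet (G : SimpleGraph V) (v : V) : (G.neighborSet v).ncard = G.degree v := by
  rw [Set.ncard_eq_toFinset_card']; rfl

lemma ncard_edgeSet (G : SimpleGraph V) : G.edgeSet.ncard = G.edgeFinset.card := by
  rw [Set.ncard_eq_toFinset_card']; rfl

variable [DecidableEq V]

lemma sum_edgeFinset_eq_sum_powerset (f : Finset (Sym2 V) → ℝ) :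
    ∑ G : SimpleGraph V, f G.edgeFinset
      = ∑ s ∈ (⊤ : SimpleGraph V).edgeFinset.powerset, f s := by
  refine sum_nbij' (fun G => G.edgeFinset) (fun s => fromEdgeSet s) (fun G _ => ?_)
    (fun _ _ => mem_univ _) (fun G _ => ?_) (fun s hs => ?_) (fun _ _ => rfl)
  · exact mem_powerset.2 (edgeFinset_mono le_top)
  · simp
  · ext e
    have := @mem_powerset.1 hs e
    simp only [mem_edgeFinset, edgeSet_top, Set.mem_compl_iff] at this
    simp only [mem_edgeFinset, edgeSet_fromEdgeSet, Set.mem_sdiff, mem_coe]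
    tauto

lemma degree_eq_card_edgeFinset_inter_incidenceFinset (G : SimpleGraph V) (v : V) :
    G.degree v = (G.edgeFinset ∩ (⊤ : SimpleGraph V).incidenceFinset v).card := by
  rw [← card_incidenceFinset_eq_degree, incidenceFinset_eq_filter, incidenceFinset_eq_filter,
    inter_filter, inter_eq_left.2 (edgeFinset_mono le_top)]

lemma sum_randSubsetProb_mul_card_degree_lt (p : ℝ) (K : ℕ) :
    ∑ G : SimpleGraph V, randSubsetProb (⊤ : SimpleGraph V).edgeFinset p G.edgeFinset
        * #{v | G.degree v < K}
      = Fintype.card V * binomLowerTail (Fintype.card V - 1) p K := by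
  let w := randSubsetProb (⊤ : SimpleGraph V).edgeFinset p
  let I := (⊤ : SimpleGraph V).incidenceFinset
  calc ∑ G : SimpleGraph V, w G.edgeFinset * #{v | G.degree v < K}
      = ∑ v, ∑ G : SimpleGraph V,
          w G.edgeFinset * (if (G.edgeFinset ∩ I v).card < K then 1 else 0) := by
        rw [sum_comm]
        refine sum_congr rfl fun G _ => ?_
        rw [natCast_card_filter, mul_sum]
        simp only [degree_eq_card_edgeFinset_inter_incidenceFinset, I]
    _ = ∑ v, ∑ s ∈ (⊤ : SimpleGraph V).edgeFinset.powerset,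
          w s * (if (s ∩ I v).card < K then 1 else 0) :=
        sum_congr rfl fun v _ =>
          sum_edgeFinset_eq_sum_powerset fun s => w s * (if (s ∩ I v).card < K then 1 else 0)
    _ = ∑ _v : V, binomLowerTail (Fintype.card V - 1) p K := by
        refine sum_congr rfl fun v _ => ?_
        rw [sum_randSubsetProb_mul_inter (incidenceFinset_subset ⊤ v)
          (fun u => if u.card < K then 1 else 0), sum_randSubsetProb_card_lt,
          card_incidenceFinset_eq_degree, complete_graph_degree]
    _ = Fintype.card V * binomLowerTail (Fintype.card V - 1) p K := by simp

end Graph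

lemma one_sub_sum_filter_le_le_div {ι : Type*} {s : Finset ι} {w X : ι → ℝ} {t : ℝ}
    (hw : ∀ i ∈ s, 0 ≤ w i) (hw1 : ∑ i ∈ s, w i = 1) (hX : ∀ i ∈ s, 0 ≤ X i) (ht : 0 < t) :
    1 - ∑ i ∈ s with X i ≤ t, w i ≤ (∑ i ∈ s, w i * X i) / t := by
  rw [← hw1, ← sum_filter_add_sum_filter_not s (X · ≤ t), add_sub_cancel_left, le_div_iff₀ ht,
    sum_mul]
  calc ∑ i ∈ s with ¬X i ≤ t, w i * t ≤ ∑ i ∈ s with ¬X i ≤ t, w i * X i :=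
        sum_le_sum fun i hi => by
          rw [mem_filter, not_le] at hi
          exact mul_le_mul_of_nonneg_left hi.2.le (hw i hi.1)
    _ ≤ ∑ i ∈ s, w i * X i :=
        sum_le_sum_of_subset_of_nonneg (filter_subset _ _) fun i hi _ =>
          mul_nonneg (hw i hi) (hX i hi)

open Classical in
lemma erProb_eq_sum_filter (n : ℕ) (p : ℝ) (A : Set (SimpleGraph (Fin n))) :
    erProb n p A
      = ∑ G with G ∈ A, randSubsetProb (⊤ : SimpleGraph (Fin n)).edgeFinset p G.edgeFinset := by
  rw [erProb, sum_filter]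
  simp only [randSubsetProb, ncard_edgeSet, SimpleGraph.card_edgeFinset_top_eq_card_choose_two,
    Fintype.card_fin]

open Classical in
lemma erProb_le_one {n : ℕ} {p : ℝ} (hp0 : 0 ≤ p) (hp1 : p ≤ 1) (A : Set (SimpleGraph (Fin n))) :
    erProb n p A ≤ 1 := by
  rw [erProb_eq_sum_filter, ← sum_randSubsetProb (⊤ : SimpleGraph (Fin n)).edgeFinset p,
    ← sum_edgeFinset_eq_sum_powerset]
  exact sum_le_sum_of_subset_of_nonneg (filter_subset _ _)
    fun _ _ _ => randSubsetProb_nonneg hp0 hp1 _ _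

open Classical in
lemma one_sub_erProb_le {n : ℕ} {p t : ℝ} (hp0 : 0 ≤ p) (hp1 : p ≤ 1) (ht : 0 < t) (L : ℝ) :
    1 - erProb n p {G | (({v : Fin n | ((G.neighborSet v).ncard : ℝ) < L}).ncard : ℝ) ≤ t}
      ≤ n / t * binomLowerTail (n - 1) p ⌈L⌉₊ := by
  let w (G : SimpleGraph (Fin n)) :=
    randSubsetProb (⊤ : SimpleGraph (Fin n)).edgeFinset p G.edgeFinset
  have hsmall (G : SimpleGraph (Fin n)) :
      ({v | ((G.neighborSet v).ncard : ℝ) < L}).ncard = #{v | G.degree v < ⌈L⌉₊} := by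
    rw [← Set.ncard_coe_finset]
    congr
    ext v
    simp [ncard_neighborSet, Nat.lt_ceil]
  have hw1 : ∑ G, w G = 1 := by
    rw [sum_edgeFinset_eq_sum_powerset (randSubsetProb _ p), sum_randSubsetProb]
  rw [erProb_eq_sum_filter]
  simp only [Set.mem_ofPred_eq, hsmall]
  calc _ ≤ (∑ G, w G * #{v | G.degree v < ⌈L⌉₊}) / t :=
        one_sub_sum_filter_le_le_div (fun G _ => randSubsetProb_nonneg hp0 hp1 _ _) hw1
          (fun _ _ => Nat.cast_nonneg _) ht
    _ = n / t * binomLowerTail (n - 1) p ⌈L⌉₊ := by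
        rw [sum_randSubsetProb_mul_card_degree_lt, Fintype.card_fin]
        ring

lemma choose_mul_pow_mul_pow_le {p : ℝ} (hp0 : 0 ≤ p) (hp1 : p ≤ 1) (m j : ℕ) :
    m.choose j * p ^ j * (1 - p) ^ (m - j) ≤ (m * p * exp p) ^ j / j ! * exp (-(p * m)) := by
  rcases lt_or_ge m j with hmj | hjm
  · rw [Nat.choose_eq_zero_of_lt hmj, Nat.cast_zero, zero_mul, zero_mul]
    positivity
  have hgeom : (1 - p) ^ (m - j) ≤ exp p ^ j * exp (-(p * m)) :=
    calc (1 - p) ^ (m - j) ≤ exp (-p) ^ (m - j) :=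
          pow_le_pow_left₀ (sub_nonneg.2 hp1) (by linarith [add_one_le_exp (-p)]) _
      _ = exp p ^ j * exp (-(p * m)) := by
          rw [← exp_nat_mul, ← exp_nat_mul, ← exp_add, Nat.cast_sub hjm]
          ring_nf
  calc m.choose j * p ^ j * (1 - p) ^ (m - j)
      ≤ m ^ j / j ! * p ^ j * (exp p ^ j * exp (-(p * m))) := by
        gcongr
        exact Nat.choose_le_pow_div j m
    _ = (m * p * exp p) ^ j / j ! * exp (-(p * m)) := by
        rw [mul_pow, mul_pow]
        ring

lemma pow_div_factorial_le_of_le {x : ℝ} {j K : ℕ} (hjK : j ≤ K) (hKx : K ≤ x) :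
    x ^ j / j ! ≤ x ^ K / K ! := by
  induction K, hjK using Nat.le_induction with
  | base => rfl
  | succ K _ ih =>
    have hKx' : (K + 1 : ℝ) ≤ x := by exact_mod_cast hKx
    have hx : 0 ≤ x := by linarith [(K.cast_nonneg : (0 : ℝ) ≤ K)]
    calc x ^ j / j ! ≤ x ^ K / K ! := ih (by linarith)
      _ ≤ x ^ K / K ! * (x / (K + 1)) :=
          le_mul_of_one_le_right (by positivity) ((one_le_div (by positivity)).2 hKx')
      _ = x ^ (K + 1) / (K + 1)! := by
          rw [pow_succ, Nat.factorial_succ]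
          push_cast
          field_simp

lemma pow_div_factorial_le_exp_mul {x c : ℝ} {K : ℕ} (hx : 0 ≤ x) (hxK : x ≤ exp c * K) :
    x ^ K / K ! ≤ exp ((c + 1) * K) :=
  calc x ^ K / K ! ≤ (exp c * K) ^ K / K ! := by gcongr
    _ = exp c ^ K * ((K : ℝ) ^ K / K !) := by rw [mul_pow]; ring
    _ ≤ exp c ^ K * exp K := by gcongr; exact pow_div_factorial_le_exp _ (Nat.cast_nonneg K) K
    _ = exp ((c + 1) * K) := by rw [← exp_nat_mul, ← exp_add]; ring_nf

lemma binomLowerTail_le {m K : ℕ} {p : ℝ} (hp0 : 0 ≤ p) (hp1 : p ≤ 1)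
    (hK : K ≤ m * p * exp p) :
    binomLowerTail m p K ≤ K * ((m * p * exp p) ^ K / K !) * exp (-(p * m)) :=
  calc binomLowerTail m p K ≤ ∑ j ∈ range K, (m * p * exp p) ^ j / j ! * exp (-(p * m)) :=
        sum_le_sum fun j _ => choose_mul_pow_mul_pow_le hp0 hp1 m j
    _ ≤ ∑ _j ∈ range K, (m * p * exp p) ^ K / K ! * exp (-(p * m)) :=
        sum_le_sum fun j hj => mul_le_mul_of_nonneg_right
          (pow_div_factorial_le_of_le (mem_range.1 hj).le hK) (exp_nonneg _)
    _ = K * ((m * p * exp p) ^ K / K !) * exp (-(p * m)) := by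
        rw [sum_const, card_range, nsmul_eq_mul]
        ring

lemma two_mul_log_le_self {x : ℝ} (hx : 0 < x) : 2 * log x ≤ x := by
  have h := add_one_le_exp (log x - 1)
  rw [exp_sub, exp_log hx, le_div_iff₀ (exp_pos 1)] at h
  nlinarith [exp_one_gt_two, log_le_sub_one_of_pos hx]

lemma log_add_div_mem_Icc {n : ℕ} {a : ℝ} (ha0 : 0 ≤ a) (haL : a ≤ log n) :
    (log n + a) / n ∈ Set.Icc 0 1 := by
  have hL : 0 ≤ log n := log_natCast_nonneg n
  refine ⟨by positivity, div_le_one_of_le₀ ?_ n.cast_nonneg⟩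
  rcases Nat.eq_zero_or_pos n with rfl | hn
  · simp_all
  · linarith [two_mul_log_le_self (Nat.cast_pos.2 hn)]

lemma two_hundred_le_exp_six : (200 : ℝ) ≤ exp 6 := by
  have h := pow_le_pow_left₀ (by norm_num) exp_one_gt_d9.le 6
  rw [exp_one_pow] at h
  norm_num at h ⊢
  linarith

lemma binomLowerTail_pred_le {n : ℕ} {a : ℝ} (ha0 : 0 ≤ a) (haL : a ≤ log n) (hL : 3 ≤ log n) :
    binomLowerTail (n - 1) ((log n + a) / n) ⌈log n / 100⌉₊
      ≤ log n * exp (8 * (log n / 100 + 1)) * exp (1 - log n) := by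
  have hn : (0 : ℝ) < n := Nat.cast_pos.2 (Nat.pos_of_ne_zero (by rintro rfl; norm_num at hL))
  set L := log n
  obtain ⟨hp0, hp1⟩ := log_add_div_mem_Icc ha0 haL
  set p := (L + a) / n
  have hpn : p * n = L + a := div_mul_cancel₀ _ hn.ne'
  set K := ⌈L / 100⌉₊
  have hK1 : L / 100 ≤ K := Nat.le_ceil _
  have hK2 : (K : ℝ) < L / 100 + 1 := Nat.ceil_lt_add_one (by positivity)
  have hm : ((n - 1 : ℕ) : ℝ) = n - 1 := Nat.cast_pred (by exact_mod_cast hn)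
  have hpm : L - 1 ≤ p * (n - 1 : ℕ) := by
    rw [hm, mul_sub, hpn]
    linarith
  have hep : 1 ≤ exp p := one_le_exp hp0
  have hKx : (K : ℝ) ≤ (n - 1 : ℕ) * p * exp p := by
    nlinarith
  have hxK : ((n - 1 : ℕ) : ℝ) * p * exp p ≤ exp 7 * K := by
    have hmp : ((n - 1 : ℕ) : ℝ) * p ≤ L + a := by
      rw [hm, ← hpn]
      nlinarith
    calc ((n - 1 : ℕ) : ℝ) * p * exp p ≤ (L + a) * exp 1 :=
          mul_le_mul hmp (exp_le_exp.2 hp1) (exp_nonneg _) (by linarith)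
      _ ≤ exp 1 * 200 * K := by nlinarith [exp_pos 1]
      _ ≤ exp 1 * exp 6 * K := by gcongr; exact two_hundred_le_exp_six
      _ = exp 7 * K := by rw [← exp_add]; norm_num
  calc binomLowerTail (n - 1) p K
      ≤ K * ((((n - 1 : ℕ) : ℝ) * p * exp p) ^ K / K !) * exp (-(p * (n - 1 : ℕ))) :=
        binomLowerTail_le hp0 hp1 hKx
    _ ≤ L * exp ((7 + 1) * (L / 100 + 1)) * exp (1 - L) := by
        gcongr
        · linarith
        · exact (pow_div_factorial_le_exp_mul (by positivity) hxK).trans (by gcongr)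
        · linarith
    _ = L * exp (8 * (L / 100 + 1)) * exp (1 - L) := by norm_num

lemma one_sub_erProb_few_small_le {n : ℕ} {a : ℝ} (ha0 : 0 ≤ a) (haL : a ≤ log n)
    (hL : 3 ≤ log n) :
    1 - erProb n ((log n + a) / n)
        {G | (({v : Fin n | ((G.neighborSet v).ncard : ℝ) < log n / 100}).ncard : ℝ)
          ≤ (n : ℝ) ^ (0.1 : ℝ)}
      ≤ exp 9 * (log n * exp (-(0.02 * log n))) := by
  obtain ⟨hp0, hp1⟩ := log_add_div_mem_Icc ha0 haL
  have hn : (0 : ℝ) < n := Nat.cast_pos.2 (Nat.pos_of_ne_zero (by rintro rfl; norm_num at hL))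
  have hnt : (n : ℝ) / (n : ℝ) ^ (0.1 : ℝ) = exp (0.9 * log n) := by
    rw [rpow_def_of_pos hn, ← exp_log hn, ← exp_sub, log_exp]
    ring_nf
  set L := log n
  calc _ ≤ n / (n : ℝ) ^ (0.1 : ℝ) * binomLowerTail (n - 1) ((L + a) / n) ⌈L / 100⌉₊ :=
        one_sub_erProb_le hp0 hp1 (by positivity) _
    _ ≤ exp (0.9 * L) * (L * exp (8 * (L / 100 + 1)) * exp (1 - L)) := by
        rw [hnt]
        gcongr
        exact binomLowerTail_pred_le ha0 haL hL
    _ = L * exp (0.9 * L + (8 * (L / 100 + 1) + (1 - L))) := by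
        rw [exp_add, exp_add]
        ring
    _ = exp 9 * (L * exp (-(0.02 * L))) := by
        rw [show 0.9 * L + (8 * (L / 100 + 1) + (1 - L)) = 9 + -(0.02 * L) by ring, exp_add]
        ring

lemma tendsto_mul_exp_neg_mul_atTop {c : ℝ} (hc : 0 < c) :
    Tendsto (fun y => y * exp (-(c * y))) atTop (𝓝 0) := by
  have h := ((tendsto_pow_mul_exp_neg_atTop_nhds_zero 1).comp
    (tendsto_id.const_mul_atTop hc)).const_mul c⁻¹
  rw [mul_zero] at h
  refine h.congr fun y => ?_
  simp only [Function.comp_apply, id, pow_one]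
  field_simp

/-- If `α n → +∞`, `α n = o(log n)`, and `p n = (log n + α n) / n`, then w.h.p. the number of
small vertices (those of degree less than `(log n)/100`) in `G(n, p n)` is at most `n^0.1`. -/
theorem er_few_small_vertices_whp (α : ℕ → ℝ) (hα : Filter.Tendsto α Filter.atTop Filter.atTop)
    (hαo : Filter.Tendsto (fun n : ℕ => α n / Real.log n) Filter.atTop (nhds 0)) :
    Filter.Tendsto
      (fun n : ℕ => erProb n ((Real.log n + α n) / n)
        {G | (({v : Fin n | ((G.neighborSet v).ncard : ℝ) < Real.log n / 100}).ncard : ℝ)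
          ≤ (n : ℝ) ^ (0.1 : ℝ)})
      Filter.atTop (nhds 1) := by
  have hlog : Tendsto (fun n : ℕ => log n) atTop atTop :=
    tendsto_log_atTop.comp tendsto_natCast_atTop_atTop
  have hbound := ((tendsto_mul_exp_neg_mul_atTop (by norm_num : (0 : ℝ) < 0.02)).comp
    hlog).const_mul (exp 9)
  have hlower : Tendsto (fun n : ℕ => 1 - exp 9 * (log n * exp (-(0.02 * log n)))) atTop (𝓝 1) := by
    simpa using (tendsto_const_nhds (x := (1 : ℝ))).sub hbound
  have hgood : ∀ᶠ n : ℕ in atTop, 0 ≤ α n ∧ α n ≤ log n ∧ 3 ≤ log n := by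
    filter_upwards [hα.eventually_ge_atTop 0, hαo.eventually_lt_const one_pos,
      hlog.eventually_ge_atTop 3] with n hα0 hαL hL
    exact ⟨hα0, ((div_lt_one (by linarith)).1 hαL).le, hL⟩
  refine tendsto_of_tendsto_of_tendsto_of_le_of_le' hlower tendsto_const_nhds ?_ ?_
  · filter_upwards [hgood] with n ⟨hα0, hαL, hL⟩
    linarith [one_sub_erProb_few_small_le hα0 hαL hL]
  · filter_upwards [hgood] with n ⟨hα0, hαL, _⟩
    have hp := log_add_div_mem_Icc hα0 hαL
    exact erProb_le_one hp.1 hp.2 _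
end

section
/- Let G = (V,E) be a graph and let t be a nonnegative integer. If there exist two connected spanning subgraphs G₁ = (V, E₁) and G₂ = (V, E₂) of G such that |E₁ ∩ E₂| ≤ t, then the proper connection number of G satisfies pc(G) ≤ t + 4. -/
/-!
Fix a root `r`. Give every common edge of `G₁` and `G₂` its own colour `≥ 4`, colour the other
edges of `G₁` by the parity of their distance level in `G₁` (colours `0, 1`) and the remaining
edges of `G₂` by the parity of their level in `G₂` (colours `2, 3`). To join `u` to `v`, descend
from `u` along a shortest `G₁`-path towards `r` until it first meets a shortest `G₂`-path from `v`
to `r`, then climb that one to `v`. On each part the levels drop by one at every step, so the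
parity colours alternate, and at the junction an edge of `G₁` meets a different edge of `G₂`.
-/

namespace SimpleGraph

variable {V : Type*}

noncomputable def edgeLevel (H : SimpleGraph V) (r : V) : Sym2 V → ℕ :=
  Sym2.lift ⟨fun x y => min (H.dist x r) (H.dist y r), fun _ _ => min_comm _ _⟩

@[simp]
lemma edgeLevel_mk (H : SimpleGraph V) (r x y : V) :
    H.edgeLevel r s(x, y) = min (H.dist x r) (H.dist y r) := rfl

namespace Walk

variable {G H : SimpleGraph V}

lemma map_edgeLevel_edges_of_length_eq_dist {v r : V} (p : H.Walk v r)
    (hp : p.length = H.dist v r) : p.edges.map (H.edgeLevel r) = (List.range p.length).reverse := by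
  induction p with
  | nil => rfl
  | @cons v w r h q ih =>
    rw [length_cons] at hp
    have hq : q.length = H.dist w r := by
      have := dist_le q
      have := Reachable.dist_triangle_right (u := v) ⟨q⟩
      have := dist_eq_one_iff_adj.mpr h
      omega
    simp [List.range_succ, ih hq, hq, ← hp]

lemma isChain_edgeLevel_of_length_eq_dist {v r : V} (p : H.Walk v r)
    (hp : p.length = H.dist v r) :
    p.edges.IsChain (fun e e' => H.edgeLevel r e = H.edgeLevel r e' + 1) := by
  have hdesc : ((List.range p.length).reverse).IsChain (fun a b => a = b + 1) := by
    rw [List.isChain_reverse, List.isChain_range]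
    simp
  rwa [← map_edgeLevel_edges_of_length_eq_dist p hp, List.isChain_map] at hdesc

lemma exists_isPath_edges_prefix_append_suffix [DecidableEq V] {u r v : V} (p : G.Walk u r)
    (hp : p.IsPath) (q : G.Walk r v) (hq : q.IsPath) :
    ∃ (W : G.Walk u v) (A B : List (Sym2 V)), W.IsPath ∧ W.edges = A ++ B ∧
      A <+: p.edges ∧ B <:+ q.edges ∧ W.support ⊆ p.support ++ q.support := by
  induction p with
  | nil => exact ⟨q, [], q.edges, hq, rfl, List.nil_prefix, List.suffix_refl _, by simp⟩
  | @cons u x r h p ih =>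
    rw [cons_isPath_iff] at hp
    by_cases hu : u ∈ q.support
    · refine ⟨q.dropUntil u hu, [], _, hq.dropUntil hu, rfl, List.nil_prefix,
        q.edges_dropUntil_suffix_edges hu, fun y hy => ?_⟩
      exact List.mem_append_right _ (q.support_dropUntil_subset_support hu hy)
    · obtain ⟨W, A, B, hW, hWAB, hA, hB, hWs⟩ := ih hp.1 q hq
      refine ⟨cons h W, s(u, x) :: A, B, ?_, by simp [hWAB], (List.prefix_cons_inj _).mpr hA,
        hB, ?_⟩
      · rw [cons_isPath_iff]
        exact ⟨hW, fun huW => by simpa [hu, hp.2] using hWs huW⟩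
      · intro y hy
        simp only [support_cons, List.cons_append, List.mem_cons] at hy ⊢
        exact hy.imp_right (hWs ·)

end Walk

section Coloring

variable {G₁ G₂ : SimpleGraph V} {r : V} {idx : Sym2 V → ℕ}

variable (G₁ G₂ r idx) in
open Classical in
noncomputable def twoLevelColoring (e : Sym2 V) : ℕ :=
  if e ∈ G₁.edgeSet ∩ G₂.edgeSet then idx e + 4
  else if e ∈ G₁.edgeSet then G₁.edgeLevel r e % 2
  else G₂.edgeLevel r e % 2 + 2

lemma twoLevelColoring_of_mem_inter {e : Sym2 V} (he : e ∈ G₁.edgeSet ∩ G₂.edgeSet) :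
    twoLevelColoring G₁ G₂ r idx e = idx e + 4 := by
  simp [twoLevelColoring, he]

lemma twoLevelColoring_lt_four {e : Sym2 V} (he : e ∉ G₁.edgeSet ∩ G₂.edgeSet) :
    twoLevelColoring G₁ G₂ r idx e < 4 := by
  unfold twoLevelColoring
  split_ifs <;> omega

lemma twoLevelColoring_lt {t : ℕ} (hlt : ∀ e ∈ G₁.edgeSet ∩ G₂.edgeSet, idx e < t) (e : Sym2 V) :
    twoLevelColoring G₁ G₂ r idx e < t + 4 := by
  by_cases he : e ∈ G₁.edgeSet ∩ G₂.edgeSet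
  · rw [twoLevelColoring_of_mem_inter he]
    exact Nat.add_lt_add_right (hlt e he) 4
  · exact (twoLevelColoring_lt_four he).trans_le (Nat.le_add_left 4 t)

lemma twoLevelColoring_ne_of_mem_inter (hinj : Set.InjOn idx (G₁.edgeSet ∩ G₂.edgeSet))
    {e e' : Sym2 V} (hne : e ≠ e')
    (h : e ∈ G₁.edgeSet ∩ G₂.edgeSet ∨ e' ∈ G₁.edgeSet ∩ G₂.edgeSet) :
    twoLevelColoring G₁ G₂ r idx e ≠ twoLevelColoring G₁ G₂ r idx e' := by
  by_cases he : e ∈ G₁.edgeSet ∩ G₂.edgeSet <;> by_cases he' : e' ∈ G₁.edgeSet ∩ G₂.edgeSet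
  · rw [twoLevelColoring_of_mem_inter he, twoLevelColoring_of_mem_inter he', Ne,
      Nat.add_right_cancel_iff]
    exact hinj.ne he he' hne
  · have := twoLevelColoring_lt_four (r := r) (idx := idx) he'
    rw [twoLevelColoring_of_mem_inter he]
    omega
  · have := twoLevelColoring_lt_four (r := r) (idx := idx) he
    rw [twoLevelColoring_of_mem_inter he']
    omega
  · tauto

lemma twoLevelColoring_ne_of_edgeLevel_left (hinj : Set.InjOn idx (G₁.edgeSet ∩ G₂.edgeSet))
    {e e' : Sym2 V} (he : e ∈ G₁.edgeSet) (he' : e' ∈ G₁.edgeSet)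
    (hlevel : G₁.edgeLevel r e = G₁.edgeLevel r e' + 1) :
    twoLevelColoring G₁ G₂ r idx e ≠ twoLevelColoring G₁ G₂ r idx e' := by
  by_cases h : e ∈ G₁.edgeSet ∩ G₂.edgeSet ∨ e' ∈ G₁.edgeSet ∩ G₂.edgeSet
  · exact twoLevelColoring_ne_of_mem_inter hinj (by rintro rfl; omega) h
  · rw [not_or] at h
    simp only [twoLevelColoring, if_neg h.1, if_neg h.2, if_pos he, if_pos he']
    omega

lemma twoLevelColoring_ne_of_edgeLevel_right (hinj : Set.InjOn idx (G₁.edgeSet ∩ G₂.edgeSet))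
    {e e' : Sym2 V} (he : e ∈ G₂.edgeSet) (he' : e' ∈ G₂.edgeSet)
    (hlevel : G₂.edgeLevel r e = G₂.edgeLevel r e' + 1) :
    twoLevelColoring G₁ G₂ r idx e ≠ twoLevelColoring G₁ G₂ r idx e' := by
  by_cases h : e ∈ G₁.edgeSet ∩ G₂.edgeSet ∨ e' ∈ G₁.edgeSet ∩ G₂.edgeSet
  · exact twoLevelColoring_ne_of_mem_inter hinj (by rintro rfl; omega) h
  · rw [not_or] at h
    have h₁ : e ∉ G₁.edgeSet := fun h₁ => h.1 ⟨h₁, he⟩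
    have h₁' : e' ∉ G₁.edgeSet := fun h₁ => h.2 ⟨h₁, he'⟩
    simp only [twoLevelColoring, if_neg h.1, if_neg h.2, if_neg h₁, if_neg h₁']
    omega

lemma twoLevelColoring_ne_of_mem_left_of_mem_right
    (hinj : Set.InjOn idx (G₁.edgeSet ∩ G₂.edgeSet)) {e e' : Sym2 V} (hne : e ≠ e')
    (he : e ∈ G₁.edgeSet) (he' : e' ∈ G₂.edgeSet) :
    twoLevelColoring G₁ G₂ r idx e ≠ twoLevelColoring G₁ G₂ r idx e' := by
  by_cases h : e ∈ G₁.edgeSet ∩ G₂.edgeSet ∨ e' ∈ G₁.edgeSet ∩ G₂.edgeSet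
  · exact twoLevelColoring_ne_of_mem_inter hinj hne h
  · rw [not_or] at h
    have h₁' : e' ∉ G₁.edgeSet := fun h₁ => h.2 ⟨h₁, he'⟩
    simp only [twoLevelColoring, if_neg h.1, if_neg h.2, if_pos he, if_neg h₁']
    omega

lemma isChain_map_twoLevelColoring_append (hinj : Set.InjOn idx (G₁.edgeSet ∩ G₂.edgeSet))
    {A B : List (Sym2 V)} (hAB : (A ++ B).Nodup)
    (hA₁ : ∀ e ∈ A, e ∈ G₁.edgeSet)
    (hA : A.IsChain fun e e' => G₁.edgeLevel r e = G₁.edgeLevel r e' + 1)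
    (hB₂ : ∀ e ∈ B, e ∈ G₂.edgeSet)
    (hB : B.IsChain fun e e' => G₂.edgeLevel r e' = G₂.edgeLevel r e + 1) :
    ((A ++ B).map (twoLevelColoring G₁ G₂ r idx)).IsChain (· ≠ ·) := by
  rw [List.isChain_map, List.isChain_append]
  refine ⟨hA.imp_of_mem_imp fun e e' he he' hlevel =>
      twoLevelColoring_ne_of_edgeLevel_left hinj (hA₁ e he) (hA₁ e' he') hlevel,
    hB.imp_of_mem_imp fun e e' he he' hlevel =>
      (twoLevelColoring_ne_of_edgeLevel_right hinj (hB₂ e' he') (hB₂ e he) hlevel).symm,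
    fun e he e' he' => ?_⟩
  have he := List.mem_of_mem_getLast? he
  have he' := List.mem_of_mem_head? he'
  exact twoLevelColoring_ne_of_mem_left_of_mem_right hinj
    (fun h => List.disjoint_of_nodup_append hAB he (h ▸ he')) (hA₁ e he) (hB₂ e' he')

end Coloring

end SimpleGraph

open SimpleGraph

/-- If a graph `G` has two connected spanning subgraphs `G₁` and `G₂` whose edge sets share
at most `t` edges, then the proper connection number of `G` is at most `t + 4`. -/
theorem pc_le_of_two_spanning_subgraphs {V : Type*} [Fintype V] (G G₁ G₂ : SimpleGraph V)
    (t : ℕ) (h₁ : G₁ ≤ G) (h₂ : G₂ ≤ G) (hc₁ : G₁.Connected) (hc₂ : G₂.Connected)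
    (ht : (G₁.edgeSet ∩ G₂.edgeSet).ncard ≤ t) :
    properConnectionNumber G ≤ t + 4 := by
  classical
  obtain ⟨r⟩ := hc₁.nonempty
  have hcard : (G₁.edgeSet ∩ G₂.edgeSet).encard ≤ (Set.Iio t).encard := by
    rw [← (Set.toFinite _).cast_ncard_eq, ← (Set.finite_Iio t).cast_ncard_eq, Set.ncard_Iio_nat]
    exact_mod_cast ht
  obtain ⟨idx, hlt, hinj⟩ := (Set.toFinite _).exists_injOn_of_encard_le hcard
  refine Nat.sInf_le ⟨twoLevelColoring G₁ G₂ r idx, twoLevelColoring_lt hlt, fun u v _ => ?_⟩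
  obtain ⟨P, hP⟩ := hc₁.exists_walk_length_eq_dist u r
  obtain ⟨Q, hQ⟩ := hc₂.exists_walk_length_eq_dist v r
  obtain ⟨W, A, B, hW, hWAB, hA, hB, -⟩ :=
    (P.mapLe h₁).exists_isPath_edges_prefix_append_suffix
      ((P.isPath_of_length_eq_dist hP).mapLe h₁) (Q.mapLe h₂).reverse
      ((Q.isPath_of_length_eq_dist hQ).mapLe h₂).reverse
  rw [Walk.edges_mapLe_eq_edges] at hA
  rw [Walk.edges_reverse, Walk.edges_mapLe_eq_edges] at hB
  refine ⟨W, hW, hWAB ▸ isChain_map_twoLevelColoring_append hinj (hWAB ▸ hW.isTrail.edges_nodup)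
    (fun e he => P.edges_subset_edgeSet (hA.subset he))
    ((P.isChain_edgeLevel_of_length_eq_dist hP).prefix hA)
    (fun e he => Q.edges_subset_edgeSet (List.mem_reverse.mp (hB.subset he)))
    ((List.isChain_reverse.mpr (Q.isChain_edgeLevel_of_length_eq_dist hQ)).suffix hB)⟩
end
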